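/- (Primitive cycle product formula) For an n×n matrix A (as a formal power series identity, or for sufficiently small A), det(I - A) = Π_{γ_ρ ∈ Γ_ρ} (1 - w_1(γ_ρ)), where Γ_ρ is the set of non-isomorphic primitive (aperiodic) labeled cycle graphs with vertex labels in {1,...,n} and w_1(γ_ρ) is the product of the edge weights A_{ij} over the edges of γ_ρ. -/

import Mathlib

/-!
Both sides equal `exp (-∑_{k ≥ 1} tr (A ^ k) / k)`.

For the determinant this is the eigenvalue computation `det (1 - A) = ∏_μ (1 - μ)` and
`tr (A ^ k) = ∑_μ μ ^ k`, together with `-log (1 - μ) = ∑_k μ ^ k / k`; Gershgorin's theorem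
keeps every eigenvalue of a matrix with small entries inside the unit disc.

For the product, `tr (A ^ k)` is the total weight of all labelled cycles of length `k`. Every
such cycle is, in exactly one way, a primitive cycle `γ` of length `d ∣ k`, rotated by one of its
`d` rotations and wound `k / d` times around itself, and its weight is `w(γ) ^ (k / d)`. So the
`d` rotations cancel the factor `d` in `k = d * m`, and the series regroups as
`∑_γ ∑_m w(γ) ^ m / m = -∑_γ log (1 - w(γ))`.
-/

open scoped Classical

noncomputable section

/-- A labeled cycle graph of length `t+1` (`f : ZMod (t+1) → Fin n`) is
primitive (aperiodic) if no nontrivial rotation preserves all labels. -/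
def IsPrimitiveCycle {t n : ℕ} (f : ZMod (t + 1) → Fin n) : Prop :=
  ∀ c : ZMod (t + 1), (∀ i, f (i + c) = f i) → c = 0

/-- The weight `w₁` of a labeled cycle graph: the product of the edge weights. -/
def cycWeight {t n : ℕ} (A : Matrix (Fin n) (Fin n) ℝ) (f : ZMod (t + 1) → Fin n) : ℝ :=
  ∏ i : ZMod (t + 1), A (f i) (f (i + 1))

open Function Polynomial

theorem Multiset.eq_of_forall_prod_map_sub_eq {K : Type*} [CommRing K] [IsDomain K] [Infinite K]
    {s t : Multiset K} (h : ∀ c, (s.map (· - c)).prod = (t.map (· - c)).prod) : s = t := by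
  have hroots (s : Multiset K) : (s.map fun a => C a - X).prod.roots = s := by
    have hneg : (s.map fun a => C a - X) = (s.map fun a => X - C a).map Neg.neg := by
      simp [Multiset.map_map]
    rw [hneg, Multiset.prod_map_neg, Multiset.card_map,
      show (-1 : K[X]) ^ Multiset.card s = C ((-1) ^ Multiset.card s) by simp,
      roots_C_mul _ (by simp), roots_multiset_prod_X_sub_C]
  have heval (s : Multiset K) (c : K) :
      (s.map fun a => C a - X).prod.eval c = (s.map (· - c)).prod := by
    simp [eval_multiset_prod]
  rw [← hroots s, ← hroots t]
  exact congrArg roots (Polynomial.funext fun c => by rw [heval, heval, h])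

theorem hasSum_multiset_sum_map {β γ M : Type*} [AddCommMonoid M] [TopologicalSpace M]
    [ContinuousAdd M] (s : Multiset β) {f : β → γ → M} {a : β → M}
    (h : ∀ b ∈ s, HasSum (f b) (a b)) :
    HasSum (fun i => (s.map fun b => f b i).sum) (s.map a).sum := by
  induction s using Multiset.induction_on with
  | empty => simp [hasSum_zero]
  | cons b s ih =>
    simpa using (h b (Multiset.mem_cons_self b s)).add
      (ih fun b' hb' => h b' (Multiset.mem_cons_of_mem hb'))

namespace Matrix

variable {ι : Type*} [Fintype ι] [DecidableEq ι]

theorem card_roots_charpoly (M : Matrix ι ι ℂ) :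
    Multiset.card M.charpoly.roots = Fintype.card ι := by
  rw [← charpoly_natDegree_eq_dim M, ← splits_iff_card_roots.mp (IsAlgClosed.splits _)]

theorem det_smul_one_sub_eq_prod_roots (M : Matrix ι ι ℂ) (c : ℂ) :
    (c • 1 - M).det = (M.charpoly.roots.map (c - ·)).prod := by
  rw [smul_one_eq_diagonal, ← scalar_apply, ← eval_charpoly,
    (IsAlgClosed.splits M.charpoly).eq_prod_roots_of_monic M.charpoly_monic]
  simp [eval_multiset_prod]

theorem det_sub_smul_one_eq_prod_roots (M : Matrix ι ι ℂ) (c : ℂ) :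
    (M - c • 1).det = (M.charpoly.roots.map (· - c)).prod := by
  rw [← neg_sub, det_neg, det_smul_one_sub_eq_prod_roots, ← card_roots_charpoly M,
    ← Multiset.card_map (c - ·), ← Multiset.prod_map_neg]
  simp

/-- Writing `X ^ k - c = ∏_ν (X - ν)`, we get `M ^ k - c = ∏_ν (M - ν)`, hence
`det (M ^ k - c) = ∏_μ ∏_ν (μ - ν) = ∏_μ (μ ^ k - c)` for every `c`. -/
theorem roots_charpoly_pow (M : Matrix ι ι ℂ) {k : ℕ} (hk : k ≠ 0) :
    (M ^ k).charpoly.roots = M.charpoly.roots.map (· ^ k) := by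
  refine Multiset.eq_of_forall_prod_map_sub_eq fun c => ?_
  obtain ⟨l, hl⟩ : ∃ l : List ℂ, X ^ k - C c = (l.map fun a => X - C a).prod := by
    refine ⟨(X ^ k - C c).roots.toList, ?_⟩
    rw [← Multiset.prod_coe, ← Multiset.map_coe, Multiset.coe_toList]
    exact (IsAlgClosed.splits _).eq_prod_roots_of_monic (monic_X_pow_sub_C c hk)
  have hpow : M ^ k - c • 1 = (l.map fun a => M - a • 1).prod := by
    simpa [map_list_prod, comp_def, Algebra.algebraMap_eq_smul_one] using
      congrArg (aeval M) hl
  have hroot (μ : ℂ) : (l.map (μ - ·)).prod = μ ^ k - c := by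
    simpa [eval_list_prod, comp_def] using (congrArg (Polynomial.eval μ) hl).symm
  rw [← det_sub_smul_one_eq_prod_roots, hpow, ← coe_detMonoidHom, map_list_prod, List.map_map]
  simp only [comp_def, coe_detMonoidHom, det_sub_smul_one_eq_prod_roots]
  rw [← Multiset.prod_coe, ← Multiset.map_coe, Multiset.prod_map_prod_map]
  simp [hroot]

theorem trace_pow_eq_sum_roots_charpoly (M : Matrix ι ι ℂ) {k : ℕ} (hk : k ≠ 0) :
    (M ^ k).trace = (M.charpoly.roots.map (· ^ k)).sum := by
  rw [trace_eq_sum_roots_charpoly, roots_charpoly_pow M hk]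

theorem exists_norm_le_sum_norm_of_mem_roots_charpoly (M : Matrix ι ι ℂ) {μ : ℂ}
    (hμ : μ ∈ M.charpoly.roots) : ∃ i, ‖μ‖ ≤ ∑ j, ‖M i j‖ := by
  have hev : Module.End.HasEigenvalue (toLin' M) μ := by
    rw [Module.End.hasEigenvalue_iff_mem_spectrum, spectrum_toLin',
      mem_spectrum_iff_isRoot_charpoly]
    exact isRoot_of_mem_roots hμ
  obtain ⟨i, hi⟩ := eigenvalue_mem_ball hev
  refine ⟨i, ?_⟩
  rw [← Finset.add_sum_erase _ _ (Finset.mem_univ i)]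
  calc ‖μ‖ ≤ ‖M i i‖ + ‖μ - M i i‖ := norm_le_norm_add_norm_sub' μ (M i i)
    _ ≤ _ := by gcongr; exact mem_closedBall_iff_norm.mp hi

theorem det_one_sub_eq_cexp_neg (M : Matrix ι ι ℂ) (hM : ∀ μ ∈ M.charpoly.roots, ‖μ‖ < 1)
    {S : ℂ} (hS : HasSum (fun k : ℕ => (M ^ (k + 1)).trace / (k + 1)) S) :
    (1 - M).det = Complex.exp (-S) := by
  have hlog : HasSum (fun k : ℕ => (M ^ (k + 1)).trace / (k + 1))
      (M.charpoly.roots.map fun μ => -Complex.log (1 - μ)).sum := by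
    simp only [trace_pow_eq_sum_roots_charpoly M (Nat.succ_ne_zero _), ← Multiset.sum_map_div]
    exact hasSum_multiset_sum_map (f := fun (μ : ℂ) (k : ℕ) => μ ^ (k + 1) / (k + 1)) _
      fun μ hμ => Complex.hasSum_taylorSeries_neg_log' (hM μ hμ)
  rw [← one_smul ℂ (1 : Matrix ι ι ℂ), det_smul_one_sub_eq_prod_roots, hS.unique hlog,
    ← Multiset.sum_map_neg, Complex.exp_multiset_sum, Multiset.map_map]
  refine congrArg _ (Multiset.map_congr rfl fun μ hμ => ?_)
  have hμ1 : 1 - μ ≠ 0 := sub_ne_zero.2 fun h => by simpa [← h] using hM μ hμ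
  simp [Complex.exp_log hμ1]

theorem det_one_sub_eq_exp_neg (A : Matrix ι ι ℝ) (hA : ∀ i, ∑ j, |A i j| < 1) {S : ℝ}
    (hS : HasSum (fun k : ℕ => (A ^ (k + 1)).trace / (k + 1)) S) :
    (1 - A).det = Real.exp (-S) := by
  set B := Complex.ofRealHom.mapMatrix A
  have hB : ∀ μ ∈ B.charpoly.roots, ‖μ‖ < 1 := fun μ hμ => by
    obtain ⟨i, hi⟩ := B.exists_norm_le_sum_norm_of_mem_roots_charpoly hμ
    exact hi.trans_lt (by simpa [B] using hA i)
  have hSB : HasSum (fun k : ℕ => (B ^ (k + 1)).trace / (k + 1)) (S : ℂ) := by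
    refine (Complex.hasSum_ofReal.mpr hS).congr_fun fun k => ?_
    simp [B, ← Matrix.map_pow, trace]
  have hdet := B.det_one_sub_eq_cexp_neg hB hSB
  rw [← map_one Complex.ofRealHom.mapMatrix, ← map_sub, ← RingHom.map_det,
    ← Complex.ofReal_neg, ← Complex.ofReal_exp] at hdet
  exact Complex.ofReal_injective (by simpa using hdet)

end Matrix

theorem Fin.snoc_apply_eq_cons_apply_add_one {α : Type*} {m : ℕ} (p : Fin m → α) (x : α)
    (l : Fin (m + 1)) :
    (Fin.snoc p x : Fin (m + 1) → α) l = (Fin.cons x p : Fin (m + 1) → α) (l + 1) := by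
  induction l using Fin.lastCases with
  | last => simp
  | cast j => simp [Fin.coeSucc_eq_succ]

namespace Matrix

variable {ι R : Type*} [Fintype ι] [DecidableEq ι] [CommSemiring R]

theorem pow_succ_apply_eq_sum_walks (A : Matrix ι ι R) (m : ℕ) (x y : ι) :
    (A ^ (m + 1)) x y = ∑ p : Fin m → ι, ∏ l : Fin (m + 1),
      A ((Fin.cons x p : Fin (m + 1) → ι) l) ((Fin.snoc p y : Fin (m + 1) → ι) l) := by
  induction m generalizing y with
  | zero => simp [Fin.snoc]
  | succ m ih =>
    rw [pow_succ, mul_apply, ← (Fin.snocEquiv fun _ => ι).sum_comp, Fintype.sum_prod_type]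
    simp only [ih, Finset.sum_mul]
    refine Finset.sum_congr rfl fun z _ => Finset.sum_congr rfl fun p _ => ?_
    conv_rhs => rw [Fin.prod_univ_castSucc]
    simp [Fin.snocEquiv, Fin.cons_snoc_eq_snoc_cons]

theorem trace_pow_succ_eq_sum_cycles (A : Matrix ι ι R) (m : ℕ) :
    (A ^ (m + 1)).trace = ∑ f : Fin (m + 1) → ι, ∏ l, A (f l) (f (l + 1)) := by
  rw [trace, ← (Fin.consEquiv fun _ => ι).sum_comp, Fintype.sum_prod_type]
  simp [pow_succ_apply_eq_sum_walks, Fin.consEquiv, Fin.snoc_apply_eq_cons_apply_add_one]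

end Matrix

-- `ZMod (t + 1)` is `Fin (t + 1)` by definition.
theorem trace_pow_succ_eq_sum_cycWeight {n : ℕ} (A : Matrix (Fin n) (Fin n) ℝ) (t : ℕ) :
    (A ^ (t + 1)).trace = ∑ f : ZMod (t + 1) → Fin n, cycWeight A f :=
  A.trace_pow_succ_eq_sum_cycles t

theorem ZMod.prod_eq_prod_range {M : Type*} [CommMonoid M] (m : ℕ) [NeZero m]
    (F : ZMod m → M) : ∏ i, F i = ∏ i ∈ Finset.range m, F i := by
  obtain ⟨m, rfl⟩ := Nat.exists_eq_succ_of_ne_zero (NeZero.ne m)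
  rw [← Fin.prod_univ_eq_prod_range (fun i : ℕ => F i)]
  exact Fintype.prod_congr _ _ fun i => congrArg F (ZMod.natCast_zmod_val i).symm

theorem ZMod.prod_range_mul_natCast {M : Type*} [CommMonoid M] (d k : ℕ) (F : ZMod d → M) :
    ∏ i ∈ Finset.range (d * k), F i = (∏ i ∈ Finset.range d, F i) ^ k := by
  induction k with
  | zero => simp
  | succ k ih => simp [Nat.mul_succ, Finset.prod_range_add, ih, pow_succ]

theorem ZMod.prod_castHom {M : Type*} [CommMonoid M] {d m : ℕ} [NeZero d] [NeZero m]
    (h : d ∣ m) (F : ZMod d → M) :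
    ∏ i : ZMod m, F (ZMod.castHom h (ZMod d) i) = (∏ j, F j) ^ (m / d) := by
  obtain ⟨k, rfl⟩ := h
  rw [ZMod.prod_eq_prod_range, ZMod.prod_eq_prod_range,
    Nat.mul_div_cancel_left _ (Nat.pos_of_ne_zero (NeZero.ne d))]
  simpa using ZMod.prod_range_mul_natCast d k F

theorem Function.Surjective.periodic_comp_iff {F G H α : Type*} [Add G] [Add H] [FunLike F G H]
    [AddHomClass F G H] {φ : F} (hφ : Surjective φ) {g : H → α} {c : G} :
    Periodic (g ∘ φ) c ↔ Periodic g (φ c) := by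
  refine ⟨fun h y => ?_, fun h x => by simp [h (φ x)]⟩
  obtain ⟨x, rfl⟩ := hφ y
  simpa using h x

theorem iterate_rotate_one {α : Type*} {m : ℕ} (f : ZMod m → α) (d : ℕ) :
    (fun f : ZMod m → α => fun i => f (i + 1))^[d] f = fun i => f (i + d) := by
  induction d generalizing f with
  | zero => simp
  | succ d ih => simp [iterate_succ_apply, ih, add_assoc]

theorem isPeriodicPt_rotate_one_iff {α : Type*} {m : ℕ} (f : ZMod m → α) (d : ℕ) :
    IsPeriodicPt (fun f : ZMod m → α => fun i => f (i + 1)) d f ↔ Periodic f d := by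
  simp [IsPeriodicPt, IsFixedPt, iterate_rotate_one, funext_iff, Periodic]

section Cycles

variable {n : ℕ}

theorem cycWeight_rotate {t : ℕ} (A : Matrix (Fin n) (Fin n) ℝ) (f : ZMod (t + 1) → Fin n)
    (c : ZMod (t + 1)) : cycWeight A (fun i => f (i + c)) = cycWeight A f :=
  Fintype.prod_equiv (Equiv.addRight c) _ _ fun i => by simp [add_right_comm]

theorem IsPrimitiveCycle.rotate {t : ℕ} {g : ZMod (t + 1) → Fin n} (hg : IsPrimitiveCycle g)
    (c : ZMod (t + 1)) : IsPrimitiveCycle fun i => g (i + c) := fun d hd =>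
  hg d (by simpa using Periodic.add_const (f := fun i => g (i + c)) hd (-c))

/-- The cycle of length `s * u + s + u + 1 = (s + 1) * (u + 1)` winding `u + 1` times
around `g`. -/
def liftCycle {α : Type*} {s : ℕ} (u : ℕ) (g : ZMod (s + 1) → α) :
    ZMod (s * u + s + u + 1) → α :=
  g ∘ ZMod.castHom (⟨u + 1, by ring⟩ : s + 1 ∣ s * u + s + u + 1) (ZMod (s + 1))

theorem liftCycle_injective {α : Type*} {s : ℕ} (u : ℕ) :
    Injective (liftCycle (α := α) (s := s) u) :=
  (ZMod.castHom_surjective _).injective_comp_right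

theorem cycWeight_liftCycle {s : ℕ} (A : Matrix (Fin n) (Fin n) ℝ) (u : ℕ)
    (g : ZMod (s + 1) → Fin n) : cycWeight A (liftCycle u g) = cycWeight A g ^ (u + 1) := by
  have hlen : (s * u + s + u + 1) / (s + 1) = u + 1 :=
    Nat.div_eq_of_eq_mul_left s.succ_pos (by ring)
  simp only [cycWeight, liftCycle, comp_apply, map_add, map_one]
  rw [ZMod.prod_castHom (F := fun j => A (g j) (g (j + 1))), hlen]

theorem periodic_liftCycle_natCast_iff {s : ℕ} {g : ZMod (s + 1) → Fin n}
    (hg : IsPrimitiveCycle g) (u d : ℕ) :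
    Periodic (liftCycle u g) (d : ZMod (s * u + s + u + 1)) ↔ s + 1 ∣ d := by
  rw [liftCycle, (ZMod.castHom_surjective _).periodic_comp_iff, map_natCast,
    ← ZMod.natCast_eq_zero_iff]
  exact ⟨hg _, fun h => h ▸ periodic_with_period_zero g⟩

/-- The primitive root of `f` has length the minimal period of `f` under rotation. -/
theorem exists_primitive_liftCycle_eq {t : ℕ} (f : ZMod (t + 1) → Fin n) :
    ∃ (s u : ℕ) (g : ZMod (s + 1) → Fin n), IsPrimitiveCycle g ∧
      (⟨s * u + s + u, liftCycle u g⟩ : Σ t, (ZMod (t + 1) → Fin n)) = ⟨t, f⟩ := by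
  have hper (d : ℕ) : Periodic f d ↔ minimalPeriod (fun f : ZMod (t + 1) → Fin n =>
      fun i => f (i + 1)) f ∣ d := by
    rw [← isPeriodicPt_rotate_one_iff, isPeriodicPt_iff_minimalPeriod_dvd]
  have hlen : minimalPeriod _ f ∣ t + 1 := (hper _).1 (by simp)
  obtain ⟨s, hs⟩ := Nat.exists_eq_add_one_of_ne_zero (ne_zero_of_dvd_ne_zero t.succ_ne_zero hlen)
  obtain ⟨k, hk⟩ := hlen
  obtain ⟨u, rfl⟩ := Nat.exists_eq_add_one_of_ne_zero (by rintro rfl; simp at hk : k ≠ 0)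
  obtain rfl : t = s * u + s + u := by rw [hs] at hk; linarith
  set g : ZMod (s + 1) → Fin n := fun j => f (j.val : ZMod _)
  have hf : liftCycle u g = f := by
    have hP : Periodic f (s + 1 : ℕ) := (hper _).2 (hs ▸ dvd_rfl)
    funext i
    conv_rhs => rw [← ZMod.natCast_zmod_val i, ← Nat.mod_add_div' i.val (s + 1)]
    simp only [liftCycle, comp_apply, ZMod.castHom_apply, ZMod.cast_eq_val, ZMod.val_natCast, g]
    rw [Nat.cast_add (i.val % (s + 1)), Nat.cast_mul (i.val / (s + 1)), hP.nat_mul]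
  refine ⟨s, u, g, fun c hc => ?_, by rw [hf]⟩
  have hfc : Periodic f c.val := by
    rw [← hf, liftCycle, (ZMod.castHom_surjective _).periodic_comp_iff]
    simpa using hc
  have : s + 1 ∣ c.val := by simpa [hs] using (hper _).1 hfc
  exact ZMod.val_eq_zero _ |>.1 (Nat.eq_zero_of_dvd_of_lt this (ZMod.val_lt c))

def liftPrimitive (x : Σ p : ℕ × ℕ, {g : ZMod (p.1 + 1) → Fin n // IsPrimitiveCycle g}) :
    Σ t : ℕ, (ZMod (t + 1) → Fin n) :=
  ⟨x.1.1 * x.1.2 + x.1.1 + x.1.2, liftCycle x.1.2 x.2.1⟩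

theorem periodic_liftPrimitive_iff
    (x : Σ p : ℕ × ℕ, {g : ZMod (p.1 + 1) → Fin n // IsPrimitiveCycle g}) (d : ℕ) :
    Periodic (liftPrimitive x).2 (d : ZMod ((liftPrimitive x).1 + 1)) ↔ x.1.1 + 1 ∣ d :=
  periodic_liftCycle_natCast_iff x.2.2 x.1.2 d

theorem liftPrimitive_bijective : Bijective (liftPrimitive (n := n)) := by
  refine ⟨fun x y h => ?_, fun ⟨t, f⟩ => ?_⟩
  · have hs : x.1.1 = y.1.1 := by
      refine Nat.succ_injective (Nat.dvd_right_iff_eq.1 fun d => ?_)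
      rw [← periodic_liftPrimitive_iff, ← periodic_liftPrimitive_iff, h]
    have hu : x.1.2 = y.1.2 := by
      have hlen := congrArg Sigma.fst h
      simp only [liftPrimitive, hs] at hlen
      exact Nat.eq_of_mul_eq_mul_left y.1.1.succ_pos (by linarith)
    obtain ⟨⟨s, u⟩, g, hg⟩ := x
    obtain ⟨⟨s', u'⟩, g', hg'⟩ := y
    obtain ⟨rfl, rfl⟩ : s = s' ∧ u = u' := ⟨hs, hu⟩
    obtain rfl : g = g' := liftCycle_injective u (eq_of_heq (Sigma.mk.inj_iff.1 h).2)
    rfl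
  · obtain ⟨s, u, g, hg, h⟩ := exists_primitive_liftCycle_eq f
    exact ⟨⟨(s, u), g, hg⟩, h⟩

end Cycles

section Representatives

variable {n : ℕ} (P : (t : ℕ) → Finset (ZMod (t + 1) → Fin n))
  (hP : ∀ t, ∀ g ∈ P t, IsPrimitiveCycle g)

def rotateRep (x : Σ q : ((t : ℕ) × {f // f ∈ P t}) × ℕ, ZMod (q.1.1 + 1)) :
    Σ p : ℕ × ℕ, {g : ZMod (p.1 + 1) → Fin n // IsPrimitiveCycle g} :=
  ⟨(x.1.1.1, x.1.2), fun i => x.1.1.2.1 (i + x.2), (hP _ _ x.1.1.2.2).rotate x.2⟩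

include hP in
theorem rotateRep_bijective
    (hPuniq : ∀ t, ∀ f : ZMod (t + 1) → Fin n, IsPrimitiveCycle f →
      ∃! g, g ∈ P t ∧ ∃ c : ZMod (t + 1), (fun i => f (i + c)) = g) :
    Bijective (rotateRep P hP) := by
  refine ⟨?_, fun ⟨⟨s, u⟩, f, hf⟩ => ?_⟩
  · rintro ⟨⟨⟨s, g, hg⟩, u⟩, c⟩ ⟨⟨⟨s', g', hg'⟩, u'⟩, c'⟩ h
    obtain ⟨hsu, h⟩ := Sigma.mk.inj_iff.1 h
    obtain ⟨rfl, rfl⟩ := Prod.mk.inj hsu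
    have hrot : (fun i => g (i + c)) = fun i => g' (i + c') := by
      simpa using congrArg Subtype.val (eq_of_heq h)
    have hg'c : (fun i => (fun j => g (j + c)) (i + -c')) = g' :=
      funext fun i => by simpa [← sub_eq_add_neg] using congrFun hrot (i - c')
    obtain rfl : g = g' :=
      (hPuniq s _ ((hP s g hg).rotate c)).unique ⟨hg, -c, by simp⟩ ⟨hg', -c', hg'c⟩
    obtain rfl : c = c' := by
      refine sub_eq_zero.1 (hP s g hg _ fun i => ?_)
      rw [show i + (c - c') = i - c' + c by abel]
      simpa using congrFun hrot (i - c')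
    rfl
  · obtain ⟨_, ⟨hg, c, rfl⟩, -⟩ := hPuniq s f hf
    exact ⟨⟨⟨⟨s, _, hg⟩, u⟩, -c⟩, by simp [rotateRep]⟩

end Representatives

section Series

variable {n : ℕ} (A : Matrix (Fin n) (Fin n) ℝ)

def cycWeightDivLength (x : Σ t : ℕ, (ZMod (t + 1) → Fin n)) : ℝ :=
  cycWeight A x.2 / (x.1 + 1)

theorem abs_cycWeight_le {ε : ℝ} (hA : ∀ i j, |A i j| ≤ ε) {t : ℕ} (f : ZMod (t + 1) → Fin n) :
    |cycWeight A f| ≤ ε ^ (t + 1) := by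
  rw [cycWeight, Finset.abs_prod]
  simpa using Finset.prod_le_prod (s := Finset.univ) (fun i _ => abs_nonneg _)
    fun i _ => hA (f i) (f (i + 1))

theorem summable_cycWeightDivLength {ε : ℝ} (hA : ∀ i j, |A i j| ≤ ε) (hε : n * ε < 1) :
    Summable (cycWeightDivLength A) := by
  have hε0 : 0 ≤ n * ε := by
    rcases n with _ | n
    · simp
    · exact mul_nonneg n.succ.cast_nonneg ((abs_nonneg _).trans (hA 0 0))
  refine Summable.of_abs ((summable_sigma_of_nonneg fun _ => abs_nonneg _).2
    ⟨fun _ => .of_finite, ?_⟩)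
  refine .of_nonneg_of_le (fun _ => tsum_nonneg fun _ => abs_nonneg _) (fun t => ?_)
    ((summable_geometric_of_lt_one hε0 hε).mul_left (n * ε))
  rw [tsum_fintype, ← pow_succ', mul_pow]
  calc ∑ f : ZMod (t + 1) → Fin n, |cycWeightDivLength A ⟨t, f⟩|
      ≤ ∑ _f : ZMod (t + 1) → Fin n, ε ^ (t + 1) := by
        refine Finset.sum_le_sum fun f _ => ?_
        rw [cycWeightDivLength, abs_div, abs_of_pos (t.cast_add_one_pos (α := ℝ))]
        exact (div_le_self (abs_nonneg _) (by simp)).trans (abs_cycWeight_le A hA f)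
    _ = n ^ (t + 1) * ε ^ (t + 1) := by simp

theorem hasSum_trace_pow_div (hW : Summable (cycWeightDivLength A)) :
    HasSum (fun k : ℕ => (A ^ (k + 1)).trace / (k + 1)) (∑' x, cycWeightDivLength A x) := by
  refine hW.hasSum.sigma fun t => ?_
  simpa [trace_pow_succ_eq_sum_cycWeight, Finset.sum_div, cycWeightDivLength]
    using hasSum_fintype fun f => cycWeightDivLength A ⟨t, f⟩

variable (P : (t : ℕ) → Finset (ZMod (t + 1) → Fin n))
  (hP : ∀ t, ∀ g ∈ P t, IsPrimitiveCycle g)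

theorem cycWeightDivLength_liftPrimitive_rotateRep
    (q : ((t : ℕ) × {f // f ∈ P t}) × ℕ) (c : ZMod (q.1.1 + 1)) :
    cycWeightDivLength A (liftPrimitive (rotateRep P hP ⟨q, c⟩)) =
      cycWeight A q.1.2.1 ^ (q.2 + 1) / ((q.1.1 + 1) * (q.2 + 1)) := by
  simp only [cycWeightDivLength, liftPrimitive, rotateRep, cycWeight_liftCycle, cycWeight_rotate]
  push_cast
  ring

include hP in
theorem hasSum_neg_log_one_sub_cycWeight
    (hPuniq : ∀ t, ∀ f : ZMod (t + 1) → Fin n, IsPrimitiveCycle f →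
      ∃! g, g ∈ P t ∧ ∃ c : ZMod (t + 1), (fun i => f (i + c)) = g)
    (hA : ∀ t (f : ZMod (t + 1) → Fin n), |cycWeight A f| < 1)
    (hW : Summable (cycWeightDivLength A)) :
    HasSum (fun γ : (t : ℕ) × {f // f ∈ P t} => -Real.log (1 - cycWeight A γ.2.1))
      (∑' x, cycWeightDivLength A x) := by
  let e := Equiv.ofBijective _ (liftPrimitive_bijective.comp (rotateRep_bijective P hP hPuniq))
  have hq : HasSum (fun q : ((t : ℕ) × {f // f ∈ P t}) × ℕ =>
      cycWeight A q.1.2.1 ^ (q.2 + 1) / (q.2 + 1)) (∑' x, cycWeightDivLength A x) := by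
    refine (e.hasSum_iff.2 hW.hasSum).sigma fun q => ?_
    have hfiber : ∑ c : ZMod (q.1.1 + 1), cycWeightDivLength A (e ⟨q, c⟩) =
        cycWeight A q.1.2.1 ^ (q.2 + 1) / (q.2 + 1) := by
      simp only [e, Equiv.ofBijective_apply, comp_apply,
        cycWeightDivLength_liftPrimitive_rotateRep]
      rw [Finset.sum_const, Finset.card_univ, ZMod.card, nsmul_eq_mul]
      push_cast
      field_simp
    exact hfiber ▸ hasSum_fintype _
  exact hq.prod_fiberwise fun γ => (Real.hasSum_pow_div_log_of_abs_lt_one (hA γ.1 γ.2.1) :)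

end Series

/-- Primitive cycle product formula: for sufficiently small `A`, and any choice
`P` of exactly one representative from each rotation class of primitive labeled
cycle graphs (of each length `t ≥ 1`),
`det(I - A) = Π_{γ_ρ} (1 - w₁(γ_ρ))`. -/
theorem primitive_cycle_product (n : ℕ) :
    ∃ ε > (0 : ℝ), ∀ A : Matrix (Fin n) (Fin n) ℝ, (∀ i j, |A i j| < ε) →
      ∀ P : (t : ℕ) → Finset (ZMod (t + 1) → Fin n),
        (∀ t, ∀ g ∈ P t, IsPrimitiveCycle g) →
        (∀ t, ∀ f : ZMod (t + 1) → Fin n, IsPrimitiveCycle f →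
          ∃! g, g ∈ P t ∧ ∃ c : ZMod (t + 1), (fun i => f (i + c)) = g) →
        Matrix.det (1 - A)
          = ∏' p : (t : ℕ) × {f // f ∈ P t}, (1 - cycWeight A (p.2 : ZMod (p.1 + 1) → Fin n)) := by
  -- `n ε < 1` bounds the row sums and the number of cycles; `ε < 1` gives `|w(γ)| < 1`.
  refine ⟨1 / (n + 2), by positivity, fun A hA P hP hPuniq => ?_⟩
  have hA' (i j) : |A i j| ≤ 1 / (n + 2) := (hA i j).le
  have hnε : n * (1 / (n + 2 : ℝ)) < 1 := by
    rw [mul_one_div, div_lt_one (by positivity)]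
    linarith
  have hw (t) (f : ZMod (t + 1) → Fin n) : |cycWeight A f| < 1 :=
    (abs_cycWeight_le A hA' f).trans_lt
      (pow_lt_one₀ (by positivity) (by rw [div_lt_one (by positivity)]; linarith) t.succ_ne_zero)
  have hW := summable_cycWeightDivLength A hA' hnε
  have hrow (i) : ∑ j, |A i j| < 1 :=
    (Finset.sum_le_sum fun j _ => hA' i j).trans_lt (by simpa using hnε)
  have hlog := (hasSum_neg_log_one_sub_cycWeight A P hP hPuniq hw hW).neg
  simp only [neg_neg] at hlog
  rw [A.det_one_sub_eq_exp_neg hrow (hasSum_trace_pow_div A hW),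
    (Real.hasProd_of_hasSum_log (fun γ => by linarith [abs_lt.1 (hw _ γ.2.1)]) hlog).tprod_eq]
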